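/- Let v ≥ 0, ρ ≥ 0, a ≥ 0, and b > 0 be real numbers, and define the worst-case rear-car trajectory x: ℝ≥0 → ℝ by x(t) = v·t + (1/2)·a·t² for 0 ≤ t ≤ ρ, x(t) = x(ρ) + (v + ρ·a)·(t − ρ) − (1/2)·b·(t − ρ)² for ρ ≤ t ≤ ρ + (v + ρ·a)/b, and x(t) constant equal to its value at t = ρ + (v + ρ·a)/b thereafter. Then x is monotone nondecreasing and sup over t ≥ 0 of x(t) equals v·ρ + (1/2)·ρ²·a + (v + ρ·a)²/(2·b). -/

import Mathlib

open NNReal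

/-- The worst-case rear-car trajectory: a car with initial velocity `v` accelerates
at rate `a` during the response phase `[0, ρ]`, reaching velocity `v + ρ·a`, and
then brakes at constant rate `b` until it stops, remaining stationary afterwards. -/
noncomputable def rearTraj (v ρ a b : ℝ) (t : ℝ≥0) : ℝ :=
  if (t : ℝ) ≤ ρ then v * (t : ℝ) + (1/2) * a * (t : ℝ)^2
  else if (t : ℝ) ≤ ρ + (v + ρ * a) / b then
    (v * ρ + (1/2) * a * ρ^2) + (v + ρ * a) * ((t : ℝ) - ρ) - (1/2) * b * ((t : ℝ) - ρ)^2
  else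
    (v * ρ + (1/2) * a * ρ^2) + (v + ρ * a) * ((v + ρ * a) / b)
      - (1/2) * b * ((v + ρ * a) / b)^2

open Set

/-! The velocity is `v + a t` on `[0, ρ]` and `v + ρ a - b (t - ρ)` afterwards, both nonnegative
up to the stopping time `T = ρ + (v + ρ a) / b`, from which on the trajectory is frozen. Hence it
is monotone, constant on `[T, ∞)`, and its supremum is its value at `T`, the braking distance
formula. -/

noncomputable def accelPos (v a t : ℝ) : ℝ := v * t + (1/2) * a * t^2

noncomputable def brakePos (x₀ ρ V b t : ℝ) : ℝ := x₀ + V * (t - ρ) - (1/2) * b * (t - ρ)^2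

theorem accelPos_monotoneOn {v a : ℝ} (hv : 0 ≤ v) (ha : 0 ≤ a) :
    MonotoneOn (accelPos v a) (Ici 0) := by
  intro s (hs : 0 ≤ s) t _ hst
  simp only [accelPos]
  gcongr

section Braking

variable {x₀ ρ V b : ℝ}

/-- The velocity `V - b (t - ρ)` stays nonnegative up to the stopping time `ρ + V / b`. -/
theorem brakePos_monotoneOn (hb : 0 < b) : MonotoneOn (brakePos x₀ ρ V b) (Iic (ρ + V / b)) := by
  intro s _ t ht hst
  have hvel : b * (t - ρ) ≤ V := by
    have : t - ρ ≤ V / b := by simp only [mem_Iic] at ht; linarith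
    rwa [le_div_iff₀ hb, mul_comm] at this
  simp only [brakePos]
  nlinarith [mul_nonneg (sub_nonneg.2 hst) (sub_nonneg.2 hvel), mul_nonneg hb.le (sq_nonneg (t - s))]

theorem brakePos_self : brakePos x₀ ρ V b ρ = x₀ := by
  simp [brakePos]

theorem brakePos_stop (hb : b ≠ 0) : brakePos x₀ ρ V b (ρ + V / b) = x₀ + V ^ 2 / (2 * b) := by
  simp only [brakePos, add_sub_cancel_left]
  field_simp
  ring

end Braking

section RearTraj

variable {v ρ a b : ℝ} {t : ℝ≥0}

theorem rearTraj_of_le (ht : (t : ℝ) ≤ ρ) : rearTraj v ρ a b t = accelPos v a t :=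
  if_pos ht

theorem rearTraj_of_ge (hq : 0 ≤ (v + ρ * a) / b) (ht : ρ ≤ t) :
    rearTraj v ρ a b t =
      brakePos (accelPos v a ρ) ρ (v + ρ * a) b (min (t : ℝ) (ρ + (v + ρ * a) / b)) := by
  unfold rearTraj
  split_ifs with h_accel h_brake
  · have hρt : (t : ℝ) = ρ := le_antisymm h_accel ht
    rw [hρt, min_eq_left (le_add_of_nonneg_right hq), brakePos_self, accelPos]
  · rw [min_eq_left h_brake]; rfl
  · rw [min_eq_right (not_le.1 h_brake).le, brakePos, add_sub_cancel_left]; rfl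

theorem rearTraj_of_stop_le (hq : 0 ≤ (v + ρ * a) / b) (hb : b ≠ 0)
    (ht : ρ + (v + ρ * a) / b ≤ t) :
    rearTraj v ρ a b t = accelPos v a ρ + (v + ρ * a) ^ 2 / (2 * b) := by
  rw [rearTraj_of_ge hq ((le_add_of_nonneg_right hq).trans ht), min_eq_right ht, brakePos_stop hb]

theorem rearTraj_monotone (hv : 0 ≤ v) (hρ : 0 ≤ ρ) (ha : 0 ≤ a) (hb : 0 < b) :
    Monotone (rearTraj v ρ a b) := by
  have hq : 0 ≤ (v + ρ * a) / b := by positivity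
  refine MonotoneOn.Iic_union_Ici (a := ⟨ρ, hρ⟩) ?_ ?_
  · refine MonotoneOn.congr (f₁ := fun t : ℝ≥0 => accelPos v a t)
      (fun s _ t _ hst => accelPos_monotoneOn hv ha s.2 t.2 hst) fun t ht => ?_
    exact (rearTraj_of_le ht).symm
  · refine MonotoneOn.congr (f₁ := fun t : ℝ≥0 =>
        brakePos (accelPos v a ρ) ρ (v + ρ * a) b (min (t : ℝ) (ρ + (v + ρ * a) / b)))
      (fun s _ t _ hst => brakePos_monotoneOn hb (mem_Iic.2 (min_le_right _ _))
        (mem_Iic.2 (min_le_right _ _)) (min_le_min_right _ hst)) fun t ht => ?_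
    exact (rearTraj_of_ge hq ht).symm

end RearTraj

theorem rearTraj_monotone_sup (v ρ a b : ℝ)
    (hv : 0 ≤ v) (hρ : 0 ≤ ρ) (ha : 0 ≤ a) (hb : 0 < b) :
    Monotone (rearTraj v ρ a b) ∧
    (⨆ t : ℝ≥0, rearTraj v ρ a b t) = v * ρ + (1/2) * ρ^2 * a + (v + ρ * a)^2 / (2 * b) := by
  have hq : 0 ≤ (v + ρ * a) / b := by positivity
  let T : ℝ≥0 := ⟨ρ + (v + ρ * a) / b, by positivity⟩
  have hmono := rearTraj_monotone hv hρ ha hb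
  have hstop : ∀ t, T ≤ t → rearTraj v ρ a b t = rearTraj v ρ a b T := fun t ht => by
    rw [rearTraj_of_stop_le hq hb.ne' ht, rearTraj_of_stop_le hq hb.ne' le_rfl]
  have hT : rearTraj v ρ a b T = v * ρ + (1/2) * ρ^2 * a + (v + ρ * a)^2 / (2 * b) := by
    rw [rearTraj_of_stop_le hq hb.ne' le_rfl, accelPos]
    ring
  refine ⟨hmono, hT ▸ ciSup_eq_of_forall_le_of_forall_lt_exists_gt (fun t => ?_)
    fun w hw => ⟨T, hw⟩⟩
  calc rearTraj v ρ a b t ≤ rearTraj v ρ a b (max t T) := hmono (le_max_left t T)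
    _ = rearTraj v ρ a b T := hstop _ (le_max_right t T)
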